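/- arXiv:2002.00079 — 4 statements merged into one kernel-verified Lean document; each statement's English description precedes it below -/
import Mathlib

section
/- Let a1, a2 be positive reals and let φ: ℝ → ℝ be a convex function differentiable at 0 with φ'(0) < 0. Define S(w) = a1·φ(w) + a2·φ(-w). If a1 > a2, then every global minimizer w* of S satisfies w* > 0. -/
/-!
The conditional risk `S w = a₁ φ w + a₂ φ (-w)` is convex, and its derivative at `0` is
`(a₁ - a₂) φ'(0) < 0`. A convex function cannot attain its minimum at or to the left of a point
where its derivative is negative: at the point itself Fermat's rule forces the derivative to vanish,
and to the left of it the secant slope, bounded by the derivative, is negative.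
-/

open Set

theorem ConvexOn.lt_of_isMinOn_of_hasDerivAt_neg {f : ℝ → ℝ} {s : Set ℝ} {x w f' : ℝ}
    (hf : ConvexOn ℝ s f) (hx : x ∈ interior s) (hfx : HasDerivAt f f' x) (hf' : f' < 0)
    (hws : w ∈ s) (hw : IsMinOn f s w) : x < w := by
  rcases lt_trichotomy x w with hxw | rfl | hwx
  · exact hxw
  · exact absurd ((hw.isLocalMin (mem_interior_iff_mem_nhds.mp hx)).hasDerivAt_eq_zero hfx)
      hf'.ne
  · have hslope : slope f w x < 0 :=
      (hf.slope_le_of_hasDerivAt hws (interior_subset hx) hwx hfx).trans_lt hf'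
    have hmin : f w ≤ f x := hw (interior_subset hx)
    rw [slope_def_field, div_neg_iff] at hslope
    rcases hslope with ⟨-, h⟩ | ⟨h, -⟩ <;> linarith

def condRisk (φ : ℝ → ℝ) (a₁ a₂ w : ℝ) : ℝ := a₁ * φ w + a₂ * φ (-w)

theorem convexOn_condRisk {φ : ℝ → ℝ} {a₁ a₂ : ℝ} (hφ : ConvexOn ℝ univ φ) (ha₁ : 0 ≤ a₁)
    (ha₂ : 0 ≤ a₂) : ConvexOn ℝ univ (condRisk φ a₁ a₂) :=
  (hφ.smul ha₁).add ((hφ.comp_linearMap (-LinearMap.id)).smul ha₂)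

theorem hasDerivAt_condRisk_zero {φ : ℝ → ℝ} {d : ℝ} (a₁ a₂ : ℝ) (hφ : HasDerivAt φ d 0) :
    HasDerivAt (condRisk φ a₁ a₂) ((a₁ - a₂) * d) 0 := by
  have hφneg : HasDerivAt (fun v => φ (-v)) (-d) 0 := by
    simpa using HasDerivAt.comp_const_sub (0 : ℝ) 0 (by rwa [sub_zero])
  rw [show (a₁ - a₂) * d = a₁ * d + a₂ * -d by ring]
  exact (hφ.const_mul a₁).add (hφneg.const_mul a₂)

/-- Pointwise Fisher consistency lemma: if `a1 > a2 > 0`, `φ` is convex,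
differentiable at 0 with negative derivative there, then every global minimizer
of `S w = a1 * φ w + a2 * φ (-w)` is strictly positive. -/
theorem stmt_0 (a1 a2 : ℝ) (ha1 : 0 < a1) (ha2 : 0 < a2)
    (φ : ℝ → ℝ) (hconv : ConvexOn ℝ Set.univ φ)
    (d : ℝ) (hd : HasDerivAt φ d 0) (hdneg : d < 0)
    (h12 : a2 < a1)
    (w : ℝ)
    (hmin : ∀ v : ℝ, a1 * φ w + a2 * φ (-w) ≤ a1 * φ v + a2 * φ (-v)) :
    0 < w :=
  (convexOn_condRisk hconv ha1.le ha2.le).lt_of_isMinOn_of_hasDerivAt_neg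
    (by simp) (hasDerivAt_condRisk_zero a1 a2 hd)
    (mul_neg_of_pos_of_neg (sub_pos.mpr h12) hdneg) (mem_univ w) fun v _ => hmin v
end

section
/- Let a1, a2 be positive reals and let φ: ℝ → ℝ be a convex function differentiable at 0 with φ'(0) < 0. Define S(w) = a1·φ(w) + a2·φ(-w). If a1 < a2, then every global minimizer w* of S satisfies w* < 0. -/
/-! The risk `S w = a1 * φ w + a2 * φ (-w)` is convex with `S'(0) = (a1 - a2) * φ'(0) > 0`.
A convex function lies above its tangent at `0`, so a minimizer `w ≥ 0` would have
`S 0 ≤ S w`, making `0` a minimizer as well and forcing `S'(0) = 0`. -/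

open Set

lemma ConvexOn.add_mul_sub_le_of_hasDerivAt {S : Set ℝ} {f : ℝ → ℝ} {f' x y : ℝ}
    (hf : ConvexOn ℝ S f) (hx : x ∈ S) (hy : y ∈ S) (hf' : HasDerivAt f f' x) :
    f x + f' * (y - x) ≤ f y := by
  rcases lt_trichotomy y x with hyx | rfl | hxy
  · have h := hf.slope_le_of_hasDerivAt hy hx hyx hf'
    rw [slope_def_field, div_le_iff₀ (sub_pos.2 hyx)] at h
    nlinarith
  · simp
  · have h := hf.le_slope_of_hasDerivAt hx hy hxy hf'
    rw [slope_def_field, le_div_iff₀ (sub_pos.2 hxy)] at h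
    nlinarith

lemma ConvexOn.lt_of_isMinOn_of_hasDerivAt_pos {f : ℝ → ℝ} {c x w : ℝ}
    (hf : ConvexOn ℝ univ f) (hc : HasDerivAt f c x) (hpos : 0 < c) (hw : IsMinOn f univ w) :
    w < x := by
  by_contra! hxw
  have hx : IsMinOn f univ x := fun v _ =>
    calc f x ≤ f x + c * (w - x) := le_add_of_nonneg_right (by nlinarith)
      _ ≤ f w := hf.add_mul_sub_le_of_hasDerivAt (mem_univ x) (mem_univ w) hc
      _ ≤ f v := hw (mem_univ v)
  exact hpos.ne' ((hx.isLocalMin Filter.univ_mem).hasDerivAt_eq_zero hc)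

lemma ConvexOn.mul_add_mul_comp_neg {φ : ℝ → ℝ} (hφ : ConvexOn ℝ univ φ) {a b : ℝ}
    (ha : 0 ≤ a) (hb : 0 ≤ b) : ConvexOn ℝ univ (fun v => a * φ v + b * φ (-v)) :=
  (hφ.smul ha).add ((hφ.comp_linearMap (-LinearMap.id)).smul hb)

lemma HasDerivAt.mul_add_mul_comp_neg {φ : ℝ → ℝ} {d : ℝ} (hφ : HasDerivAt φ d 0) (a b : ℝ) :
    HasDerivAt (fun v => a * φ v + b * φ (-v)) ((a - b) * d) 0 := by
  have hneg : HasDerivAt (fun v => φ (-v)) (d * -1) 0 :=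
    (neg_zero (G := ℝ) ▸ hφ).comp 0 (hasDerivAt_neg 0)
  rw [show (a - b) * d = a * d + b * (d * -1) by ring]
  exact (hφ.const_mul a).add (hneg.const_mul b)

theorem stmt_1_general (a1 a2 : ℝ) (ha1 : 0 < a1)
    (φ : ℝ → ℝ) (hconv : ConvexOn ℝ Set.univ φ)
    (d : ℝ) (hd : HasDerivAt φ d 0) (hdneg : d < 0)
    (h12 : a1 < a2)
    (w : ℝ)
    (hmin : ∀ v : ℝ, a1 * φ w + a2 * φ (-w) ≤ a1 * φ v + a2 * φ (-v)) :
    w < 0 :=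
  (hconv.mul_add_mul_comp_neg ha1.le (ha1.trans h12).le).lt_of_isMinOn_of_hasDerivAt_pos
    (hd.mul_add_mul_comp_neg a1 a2) (mul_pos_of_neg_of_neg (sub_neg.2 h12) hdneg)
    (isMinOn_univ_iff.2 hmin)

/-- Pointwise Fisher consistency lemma (mirror case): if `a2 > a1 > 0`,
`φ` convex, differentiable at 0 with negative derivative, then every global
minimizer of `S w = a1 * φ w + a2 * φ (-w)` is strictly negative. -/
theorem stmt_1 (a1 a2 : ℝ) (ha1 : 0 < a1) (ha2 : 0 < a2)
    (φ : ℝ → ℝ) (hconv : ConvexOn ℝ Set.univ φ)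
    (d : ℝ) (hd : HasDerivAt φ d 0) (hdneg : d < 0)
    (h12 : a1 < a2)
    (w : ℝ)
    (hmin : ∀ v : ℝ, a1 * φ w + a2 * φ (-w) ≤ a1 * φ v + a2 * φ (-v)) :
    w < 0 :=
  stmt_1_general a1 a2 ha1 φ hconv d hd hdneg h12 w hmin
end

section
/- Let A ∈ {-1, +1} with P(A=1) = π ∈ (0,1), and let Y be an integrable real random variable. Define π_A = π if A=1 and 1-π otherwise. Then the function g ↦ E[(2YA - g)²/π_A] over constants g ∈ ℝ is uniquely minimized at g* = E[YA/π_A], and moreover g* = E[Y | A=1] - E[Y | A=-1]. -/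
/-!
Expanding the square, `R g = E[4Y²/π_A] - 4 g E[YA/π_A] + g² E[1/π_A]`, and
`E[1/π_A] = P(A = 1)/π + P(A = -1)/(1 - π) = 2`, so `R` is a quadratic with positive leading
coefficient whose vertex is `E[2YA/π_A] / E[1/π_A] = E[YA/π_A]`. Splitting the inverse-propensity
integral over `{A = 1}` and `{A = -1}`, where `YA = Y` and `YA = -Y`, gives the second formula.
-/

open MeasureTheory

section WeightedLeastSquares

variable {Ω : Type*} [MeasurableSpace Ω] {μ : Measure Ω} {Z v : Ω → ℝ}

theorem integral_sq_sub_const_div_eq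
    (hZ2 : Integrable (fun ω => Z ω ^ 2 / v ω) μ) (hZ : Integrable (fun ω => Z ω / v ω) μ)
    (hv : Integrable (fun ω => 1 / v ω) μ) (g : ℝ) :
    ∫ ω, (Z ω - g) ^ 2 / v ω ∂μ =
      ∫ ω, Z ω ^ 2 / v ω ∂μ - 2 * g * ∫ ω, Z ω / v ω ∂μ + g ^ 2 * ∫ ω, 1 / v ω ∂μ := by
  have hexpand : (fun ω => (Z ω - g) ^ 2 / v ω) =
      fun ω => Z ω ^ 2 / v ω - 2 * g * (Z ω / v ω) + g ^ 2 * (1 / v ω) := by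
    funext ω; ring
  rw [hexpand, integral_add _ (hv.const_mul _), integral_sub hZ2 (hZ.const_mul _),
    integral_const_mul, integral_const_mul]
  exact hZ2.sub (hZ.const_mul _)

theorem integral_sq_sub_weightedMean_div_lt
    (hZ2 : Integrable (fun ω => Z ω ^ 2 / v ω) μ) (hZ : Integrable (fun ω => Z ω / v ω) μ)
    (hv : Integrable (fun ω => 1 / v ω) μ) (hv_pos : 0 < ∫ ω, 1 / v ω ∂μ) {g : ℝ}
    (hg : g ≠ (∫ ω, Z ω / v ω ∂μ) / ∫ ω, 1 / v ω ∂μ) :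
    ∫ ω, (Z ω - (∫ ω, Z ω / v ω ∂μ) / ∫ ω, 1 / v ω ∂μ) ^ 2 / v ω ∂μ <
      ∫ ω, (Z ω - g) ^ 2 / v ω ∂μ := by
  set c := ∫ ω, 1 / v ω ∂μ
  set m := (∫ ω, Z ω / v ω ∂μ) / c
  have hmean : ∫ ω, Z ω / v ω ∂μ = m * c := (div_mul_cancel₀ _ hv_pos.ne').symm
  have hgap : 0 < c * (g - m) ^ 2 := by have := sub_ne_zero.2 hg; positivity
  rw [integral_sq_sub_const_div_eq hZ2 hZ hv, integral_sq_sub_const_div_eq hZ2 hZ hv, hmean]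
  linarith

end WeightedLeastSquares

section Propensity

variable {Ω : Type*} {A πA : Ω → ℝ} {π : ℝ}

theorem div_propensity_eq_piecewise (hπA : ∀ ω, πA ω = if A ω = 1 then π else 1 - π)
    (h : Ω → ℝ) :
    (fun ω => h ω / πA ω) =
      {ω | A ω = 1}.piecewise (fun ω => h ω / π) (fun ω => h ω / (1 - π)) := by
  funext ω
  simp only [Set.piecewise, Set.mem_ofPred_eq, hπA]
  split_ifs <;> rfl

theorem compl_setOf_eq_one_of_sign (hAval : ∀ ω, A ω = 1 ∨ A ω = -1) :
    {ω | A ω = 1}ᶜ = {ω | A ω = -1} := by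
  ext ω
  rcases hAval ω with h | h <;> simp [h] <;> norm_num

variable [MeasurableSpace Ω] {μ : Measure Ω}

theorem MeasureTheory.Integrable.div_propensity (hA : Measurable A)
    (hπA : ∀ ω, πA ω = if A ω = 1 then π else 1 - π) {h : Ω → ℝ} (hh : Integrable h μ) :
    Integrable (fun ω => h ω / πA ω) μ := by
  rw [div_propensity_eq_piecewise hπA]
  exact Integrable.piecewise (measurableSet_eq_fun hA measurable_const)
    (hh.div_const _).integrableOn (hh.div_const _).integrableOn

theorem integral_div_propensity (hA : Measurable A)
    (hπA : ∀ ω, πA ω = if A ω = 1 then π else 1 - π) {h : Ω → ℝ} (hh : Integrable h μ) :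
    ∫ ω, h ω / πA ω ∂μ =
      (∫ ω in {ω | A ω = 1}, h ω ∂μ) / π + (∫ ω in {ω | A ω = 1}ᶜ, h ω ∂μ) / (1 - π) := by
  rw [div_propensity_eq_piecewise hπA, integral_piecewise (measurableSet_eq_fun hA measurable_const)
    (hh.div_const _).integrableOn (hh.div_const _).integrableOn, integral_div, integral_div]

theorem integral_one_div_propensity [IsProbabilityMeasure μ] (hA : Measurable A)
    (hπA : ∀ ω, πA ω = if A ω = 1 then π else 1 - π) (hπ0 : 0 < π) (hπ1 : π < 1)
    (hπ : μ {ω | A ω = 1} = ENNReal.ofReal π) :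
    ∫ ω, 1 / πA ω ∂μ = 2 := by
  have hs : MeasurableSet {ω | A ω = 1} := measurableSet_eq_fun hA measurable_const
  have hμs : μ.real {ω | A ω = 1} = π := by
    rw [measureReal_def, hπ, ENNReal.toReal_ofReal hπ0.le]
  have hμsc : μ.real {ω | A ω = 1}ᶜ = 1 - π := by
    rw [probReal_compl_eq_one_sub hs, hμs]
  rw [integral_div_propensity hA hπA (integrable_const 1), setIntegral_const, setIntegral_const,
    hμs, hμsc, smul_eq_mul, smul_eq_mul, mul_one, mul_one, div_self hπ0.ne',
    div_self (sub_ne_zero.2 hπ1.ne')]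
  norm_num

theorem integral_mul_sign_div_propensity (hA : Measurable A) (hAval : ∀ ω, A ω = 1 ∨ A ω = -1)
    (hπA : ∀ ω, πA ω = if A ω = 1 then π else 1 - π) {Y : Ω → ℝ} (hY : Integrable Y μ) :
    ∫ ω, Y ω * A ω / πA ω ∂μ =
      (∫ ω in {ω | A ω = 1}, Y ω ∂μ) / π - (∫ ω in {ω | A ω = -1}, Y ω ∂μ) / (1 - π) := by
  have hYA : Integrable (fun ω => Y ω * A ω) μ :=
    hY.mul_bdd hA.aestronglyMeasurable (c := 1)
      (.of_forall fun ω => by rcases hAval ω with h | h <;> simp [h])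
  have htreated : ∫ ω in {ω | A ω = 1}, Y ω * A ω ∂μ = ∫ ω in {ω | A ω = 1}, Y ω ∂μ :=
    setIntegral_congr_fun (measurableSet_eq_fun hA measurable_const) fun ω (h : A ω = 1) => by
      simp [h]
  have hcontrol : ∫ ω in {ω | A ω = -1}, Y ω * A ω ∂μ = -∫ ω in {ω | A ω = -1}, Y ω ∂μ := by
    rw [← integral_neg]
    exact setIntegral_congr_fun (measurableSet_eq_fun hA measurable_const)
      fun ω (h : A ω = -1) => by simp [h]
  rw [integral_div_propensity hA hπA hYA, compl_setOf_eq_one_of_sign hAval, htreated, hcontrol]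
  ring

end Propensity

theorem stmt_5_general {Ω : Type*} [MeasurableSpace Ω] (μ : Measure Ω) [IsProbabilityMeasure μ]
    (A Y : Ω → ℝ) (hA : Measurable A)
    (hAval : ∀ ω, A ω = 1 ∨ A ω = -1)
    (π : ℝ) (hπ0 : 0 < π) (hπ1 : π < 1)
    (hπ : μ {ω | A ω = 1} = ENNReal.ofReal π)
    (hYint : Integrable Y μ) (hY2int : Integrable (fun ω => (Y ω) ^ 2) μ)
    (πA : Ω → ℝ) (hπA : ∀ ω, πA ω = if A ω = 1 then π else 1 - π)
    (R : ℝ → ℝ) (hR : ∀ g, R g = ∫ ω, (2 * Y ω * A ω - g) ^ 2 / πA ω ∂μ)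
    (gstar : ℝ) (hgstar : gstar = ∫ ω, Y ω * A ω / πA ω ∂μ) :
    (∀ g : ℝ, g ≠ gstar → R gstar < R g) ∧
      gstar = (∫ ω in {ω | A ω = 1}, Y ω ∂μ) / π -
        (∫ ω in {ω | A ω = -1}, Y ω ∂μ) / (1 - π) := by
  have hA_bdd : ∀ᵐ ω ∂μ, ‖A ω‖ ≤ 1 :=
    .of_forall fun ω => by rcases hAval ω with h | h <;> simp [h]
  have hZ : Integrable (fun ω => 2 * Y ω * A ω) μ :=
    (hYint.const_mul 2).mul_bdd hA.aestronglyMeasurable hA_bdd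
  have hZ2 : Integrable (fun ω => (2 * Y ω * A ω) ^ 2) μ :=
    (hY2int.const_mul 4).congr (.of_forall fun ω => by rcases hAval ω with h | h <;> simp [h] <;> ring)
  have hweight := integral_one_div_propensity hA hπA hπ0 hπ1 hπ
  have hmean : (∫ ω, 2 * Y ω * A ω / πA ω ∂μ) / ∫ ω, 1 / πA ω ∂μ = gstar := by
    simp only [hweight, mul_assoc, mul_div_assoc, integral_const_mul, hgstar]
    ring
  refine ⟨fun g hg => ?_, hgstar.trans (integral_mul_sign_div_propensity hA hAval hπA hYint)⟩
  rw [hR, hR, ← hmean]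
  exact integral_sq_sub_weightedMean_div_lt (hZ2.div_propensity hA hπA)
    (hZ.div_propensity hA hπA) ((integrable_const (1 : ℝ)).div_propensity hA hπA)
    (by rw [hweight]; norm_num) (hmean ▸ hg)

/-- Scalar version of Proposition 2: the weighted least squares risk
`R g = E[(2 Y A - g)² / π_A]` is uniquely minimized at `g* = E[Y A / π_A]`,
and `g* = E[Y | A = 1] - E[Y | A = -1]`. -/
theorem stmt_5 {Ω : Type*} [MeasurableSpace Ω] (μ : Measure Ω) [IsProbabilityMeasure μ]
    (A Y : Ω → ℝ) (hA : Measurable A) (hY : Measurable Y)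
    (hAval : ∀ ω, A ω = 1 ∨ A ω = -1)
    (π : ℝ) (hπ0 : 0 < π) (hπ1 : π < 1)
    (hπ : μ {ω | A ω = 1} = ENNReal.ofReal π)
    (hYint : Integrable Y μ) (hY2int : Integrable (fun ω => (Y ω) ^ 2) μ)
    (πA : Ω → ℝ) (hπA : ∀ ω, πA ω = if A ω = 1 then π else 1 - π)
    (R : ℝ → ℝ) (hR : ∀ g, R g = ∫ ω, (2 * Y ω * A ω - g) ^ 2 / πA ω ∂μ)
    (gstar : ℝ) (hgstar : gstar = ∫ ω, Y ω * A ω / πA ω ∂μ) :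
    (∀ g : ℝ, g ≠ gstar → R gstar < R g) ∧
      gstar = (∫ ω in {ω | A ω = 1}, Y ω ∂μ) / π -
        (∫ ω in {ω | A ω = -1}, Y ω ∂μ) / (1 - π) :=
  stmt_5_general μ A Y hA hAval π hπ0 hπ1 hπ hYint hY2int πA hπA R hR gstar hgstar
end

section
/- Let a1 > a2 > 0 and let φ(x) = (1−x)⁺ = max(1−x, 0) be the hinge loss. Define S(w) = a1·φ(w) + a2·φ(−w). Then S attains its minimum over ℝ at w* = 1, with S(1) = 2a2, and every minimizer w of S satisfies w ≥ 1 > 0. -/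
/-!
Bounding each hinge term below by its affine pieces gives two affine minorants of the risk
that touch it at `w = 1`: `2 a2 + (a1 - a2)(1 - w)`, strictly above `2 a2` for `w < 1`
because `a1 > a2`, and `2 a2 + a2 (w - 1)`, at least `2 a2` for `w ≥ 1`.
-/

def hingeRisk (a1 a2 w : ℝ) : ℝ := a1 * max (1 - w) 0 + a2 * max (1 + w) 0

section HingeRisk

variable {a1 a2 : ℝ}

theorem hingeRisk_one (a1 a2 : ℝ) : hingeRisk a1 a2 1 = 2 * a2 := by
  norm_num [hingeRisk]
  ring

theorem two_mul_add_mul_one_sub_le_hingeRisk (ha1 : 0 ≤ a1) (ha2 : 0 ≤ a2) (w : ℝ) :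
    2 * a2 + (a1 - a2) * (1 - w) ≤ hingeRisk a1 a2 w := by
  have h1 := mul_le_mul_of_nonneg_left (le_max_left (1 - w) 0) ha1
  have h2 := mul_le_mul_of_nonneg_left (le_max_left (1 + w) 0) ha2
  unfold hingeRisk
  linarith

theorem two_mul_add_mul_sub_one_le_hingeRisk (ha1 : 0 ≤ a1) (ha2 : 0 ≤ a2) (w : ℝ) :
    2 * a2 + a2 * (w - 1) ≤ hingeRisk a1 a2 w := by
  have h1 := mul_nonneg ha1 (le_max_right (1 - w) 0)
  have h2 := mul_le_mul_of_nonneg_left (le_max_left (1 + w) 0) ha2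
  unfold hingeRisk
  linarith

theorem two_mul_lt_hingeRisk_of_lt_one (ha2 : 0 ≤ a2) (h12 : a2 < a1) {w : ℝ} (hw : w < 1) :
    2 * a2 < hingeRisk a1 a2 w := by
  have := two_mul_add_mul_one_sub_le_hingeRisk (ha2.trans h12.le) ha2 w
  nlinarith

theorem two_mul_le_hingeRisk (ha2 : 0 ≤ a2) (h12 : a2 ≤ a1) (w : ℝ) :
    2 * a2 ≤ hingeRisk a1 a2 w := by
  rcases lt_or_ge w 1 with hw | hw
  · have := two_mul_add_mul_one_sub_le_hingeRisk (ha2.trans h12) ha2 w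
    nlinarith
  · have := two_mul_add_mul_sub_one_le_hingeRisk (ha2.trans h12) ha2 w
    nlinarith

end HingeRisk

/-- Pointwise Fisher consistency for hinge loss OWL: with `a1 > a2 > 0` and
`φ(x) = max (1 - x) 0`, the risk `S w = a1 φ(w) + a2 φ(-w)` attains its
minimum at `w* = 1` with value `2 a2`, and every minimizer `w` satisfies
`w ≥ 1 > 0`. -/
theorem stmt_19 (a1 a2 : ℝ) (ha2 : 0 < a2) (h12 : a2 < a1)
    (φ : ℝ → ℝ) (hφ : ∀ x, φ x = max (1 - x) 0)
    (S : ℝ → ℝ) (hS : ∀ w, S w = a1 * φ w + a2 * φ (-w)) :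
    S 1 = 2 * a2 ∧ (∀ w : ℝ, S 1 ≤ S w) ∧
      (∀ w : ℝ, (∀ v : ℝ, S w ≤ S v) → 1 ≤ w ∧ 0 < w) := by
  have hS_eq : S = hingeRisk a1 a2 := by
    ext w
    simp only [hS, hφ, hingeRisk, sub_neg_eq_add]
  subst hS_eq
  refine ⟨hingeRisk_one a1 a2, fun w ↦ ?_, fun w hmin ↦ ?_⟩
  · exact hingeRisk_one a1 a2 ▸ two_mul_le_hingeRisk ha2.le h12.le w
  · have hw : 1 ≤ w := not_lt.mp fun hw ↦
      (two_mul_lt_hingeRisk_of_lt_one ha2.le h12 hw).not_ge (hingeRisk_one a1 a2 ▸ hmin 1)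
    exact ⟨hw, zero_lt_one.trans_le hw⟩
end
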